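/- arXiv:2002.09930 — 3 statements merged into one kernel-verified Lean document; each statement's English description precedes it below -/
import Mathlib

section
/- Let p be an (n+1)×(n+1) Hermitian arrowhead matrix with (1,1)-entry c ∈ ℝ, first column below the diagonal given by z = (z_1,…,z_n) ∈ ℂⁿ, first row right of the diagonal given by the conjugates of z, and remaining block the real diagonal matrix diag(μ_1,…,μ_n). Then the characteristic polynomial of p equals (x−c)·∏_{i=1}^n (x−μ_i) − Σ_{i=1}^n |z_i|² · ∏_{j≠i} (x−μ_j). -/
/-!
Write the characteristic matrix as an arrowhead matrix `M` with corner `a`, first row `u`,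
first column `v` and diagonal block `diag d`. Multiplying `M` on the right by the arrowhead
matrix with corner `∏ d`, first row `0`, first column `-(v i * ∏_{j ≠ i} d j)` and identity
block clears the first column of `M` below the corner, leaving a block triangular matrix. Hence
`det M * ∏ d = (a * ∏ d - ∑ u i * v i * ∏_{j ≠ i} d j) * ∏ d`, and over `ℂ[X]` the factor
`∏ (X - μ i)` is nonzero and cancels.
-/

open Matrix Polynomial BigOperators

/-- The Hermitian arrowhead matrix with (1,1)-entry `c`, border `z`, and
diagonal block `diag (mu 1, …, mu n)`. -/
noncomputable def arrowhead (n : ℕ) (c : ℝ) (mu : Fin n → ℝ) (z : Fin n → ℂ) :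
    Matrix (Fin (n+1)) (Fin (n+1)) ℂ :=
  Matrix.of (Fin.cases (motive := fun _ => Fin (n+1) → ℂ)
    (Fin.cons (c : ℂ) (fun j => (starRingEnd ℂ) (z j)))
    (fun i => Fin.cons (z i) (fun j => if i = j then (mu i : ℂ) else 0)))

namespace Matrix

variable {R : Type*} [CommRing R] {n : ℕ}

def borderedDiagonal (a : R) (u v d : Fin n → R) : Matrix (Fin (n + 1)) (Fin (n + 1)) R :=
  of (Fin.cons (Fin.cons a u) fun i => Fin.cons (v i) (diagonal d i))

@[simp] lemma borderedDiagonal_zero_zero (a : R) (u v d : Fin n → R) :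
    borderedDiagonal a u v d 0 0 = a := rfl

@[simp] lemma borderedDiagonal_zero_succ (a : R) (u v d : Fin n → R) (j : Fin n) :
    borderedDiagonal a u v d 0 j.succ = u j := rfl

@[simp] lemma borderedDiagonal_succ_zero (a : R) (u v d : Fin n → R) (i : Fin n) :
    borderedDiagonal a u v d i.succ 0 = v i := rfl

@[simp] lemma borderedDiagonal_succ_succ (a : R) (u v d : Fin n → R) (i j : Fin n) :
    borderedDiagonal a u v d i.succ j.succ = diagonal d i j := rfl

lemma transpose_borderedDiagonal (a : R) (u v d : Fin n → R) :
    (borderedDiagonal a u v d)ᵀ = borderedDiagonal a v u d := by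
  ext i j
  cases i using Fin.cases <;> cases j using Fin.cases
  case succ.succ i j => by_cases h : i = j <;> simp [h, eq_comm]
  all_goals rfl

lemma borderedDiagonal_mul_borderedDiagonal_zero (a a' : R) (u v d v' d' : Fin n → R) :
    borderedDiagonal a u v d * borderedDiagonal a' 0 v' d' =
      borderedDiagonal (a * a' + ∑ k, u k * v' k) (u * d') (a' • v + d * v') (d * d') := by
  ext i j
  cases i using Fin.cases <;> cases j using Fin.cases
  case succ.succ i j => by_cases h : i = j <;> simp [mul_apply, Fin.sum_univ_succ, diagonal_apply, h]
  all_goals simp [mul_apply, Fin.sum_univ_succ, diagonal_apply, mul_comm]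

lemma det_borderedDiagonal_zero_left (a : R) (v d : Fin n → R) :
    (borderedDiagonal a 0 v d).det = a * ∏ i, d i := by
  rw [det_succ_row_zero, Fin.sum_univ_succ]
  simp only [Fin.val_zero, pow_zero, one_mul, borderedDiagonal_zero_zero, submatrix,
    Fin.zero_succAbove, borderedDiagonal_succ_succ, borderedDiagonal_zero_succ, Pi.zero_apply,
    mul_zero, zero_mul, Finset.sum_const_zero, add_zero]
  exact congrArg (a * ·) det_diagonal

lemma det_borderedDiagonal_zero_right (a : R) (u d : Fin n → R) :
    (borderedDiagonal a u 0 d).det = a * ∏ i, d i := by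
  rw [← det_transpose, transpose_borderedDiagonal, det_borderedDiagonal_zero_left]

lemma det_borderedDiagonal_mul_prod (a : R) (u v d : Fin n → R) :
    (borderedDiagonal a u v d).det * ∏ i, d i =
      (a * ∏ i, d i - ∑ i, u i * v i * ∏ j ∈ Finset.univ.erase i, d j) * ∏ i, d i := by
  set w : Fin n → R := fun i => -(v i * ∏ j ∈ Finset.univ.erase i, d j)
  have hcol : (∏ i, d i) • v + d * w = 0 := funext fun i => by
    simp [w, ← Finset.mul_prod_erase Finset.univ d (Finset.mem_univ i)]
    ring
  have hE : (borderedDiagonal (∏ i, d i) 0 w 1).det = ∏ i, d i := by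
    simp [det_borderedDiagonal_zero_left]
  calc _ = (borderedDiagonal a u v d * borderedDiagonal (∏ i, d i) 0 w 1).det := by
        rw [det_mul, hE]
    _ = _ := by
      rw [borderedDiagonal_mul_borderedDiagonal_zero, hcol, mul_one, mul_one,
        det_borderedDiagonal_zero_right]
      simp only [w, mul_neg, ← mul_assoc, Finset.sum_neg_distrib, sub_eq_add_neg]

lemma det_borderedDiagonal [IsDomain R] (a : R) (u v : Fin n → R) {d : Fin n → R}
    (hd : ∀ i, d i ≠ 0) :
    (borderedDiagonal a u v d).det =
      a * ∏ i, d i - ∑ i, u i * v i * ∏ j ∈ Finset.univ.erase i, d j :=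
  mul_right_cancel₀ (Finset.prod_ne_zero_iff.mpr fun i _ => hd i)
    (det_borderedDiagonal_mul_prod a u v d)

lemma charmatrix_borderedDiagonal (a : R) (u v d : Fin n → R) :
    charmatrix (borderedDiagonal a u v d) =
      borderedDiagonal (X - C a) (fun j => -C (u j)) (fun i => -C (v i))
        (fun i => X - C (d i)) := by
  ext i j : 1
  cases i using Fin.cases <;> cases j using Fin.cases
  case succ.succ i j => by_cases h : i = j <;> simp [h]
  all_goals simp [charmatrix_apply_ne, Fin.succ_ne_zero, (Fin.succ_ne_zero _).symm]

end Matrix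

theorem stmt0 (n : ℕ) (c : ℝ) (mu : Fin n → ℝ) (z : Fin n → ℂ) :
    (arrowhead n c mu z).charpoly =
      (X - C (c : ℂ)) * ∏ i, (X - C (mu i : ℂ)) -
        ∑ i, C ((‖z i‖ : ℂ)^2) * ∏ j ∈ Finset.univ.erase i, (X - C (mu j : ℂ)) := by
  have harrow : arrowhead n c mu z =
      borderedDiagonal (c : ℂ) (fun j => starRingEnd ℂ (z j)) z (fun i => (mu i : ℂ)) := rfl
  rw [charpoly, harrow, charmatrix_borderedDiagonal,
    det_borderedDiagonal _ _ _ fun i => X_sub_C_ne_zero _]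
  simp only [neg_mul_neg, ← C_mul, Complex.conj_mul']
end

section
/- Let M = diag(μ_1,…,μ_n) be real diagonal, x, z ∈ ℂⁿ, and X an n×n skew-Hermitian matrix with x z† + z x† + [X,M] = 0. Let μ be a value among the μ_i, with P_μ the projection onto the μ-eigenspace of M, and assume P_μ z = 0. Then P_μ (X z) = (Σ_{ν ≠ μ} ‖P_ν z‖²/(μ−ν)) · P_μ x, where the sum runs over the distinct values ν of (μ_1,…,μ_n) other than μ. -/
open Matrix BigOperators Finset

/-!
Read entrywise, the equation says `X i j * (μ i - μ j) = x i * conj (z j) + z i * conj (x j)`.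
For a row `i` in the `μ`-block we have `z i = 0`, so every entry `X i j` with `μ j ≠ μ` is
`x i * conj (z j) / (μ - μ j)`, while the columns `j` in the `μ`-block meet `z j = 0`.
Hence `(X z) i = x i * ∑_{μ j ≠ μ} |z j|² / (μ - μ j)`, and grouping the indices `j` by the
value `ν = μ j` gives the stated coefficient.
-/

section

variable {ι : Type*} [Fintype ι] [DecidableEq ι]

lemma diagonal_indicator_mulVec_apply (mu : ι → ℝ) (ν : ℝ) (v : ι → ℂ) (i : ι) :
    (diagonal (fun j => if mu j = ν then (1 : ℂ) else 0) *ᵥ v) i =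
      if mu i = ν then v i else 0 := by
  simp [mulVec_diagonal]

lemma mul_sub_eq_of_vecMulVec_add_commutator_eq_zero {x z : ι → ℂ} {X : Matrix ι ι ℂ}
    {d : ι → ℂ}
    (h : vecMulVec x (star z) + vecMulVec z (star x) + (X * diagonal d - diagonal d * X) = 0)
    (i j : ι) : X i j * (d i - d j) = x i * star (z j) + z i * star (x j) := by
  have hij := congrFun (congrFun h i) j
  simp only [Matrix.add_apply, Matrix.sub_apply, vecMulVec_apply, mul_diagonal, diagonal_mul,
    Pi.star_apply, Matrix.zero_apply] at hij
  linear_combination -hij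

lemma mulVec_apply_of_vecMulVec_add_commutator_eq_zero {x z : ι → ℂ} {X : Matrix ι ι ℂ}
    {mu : ι → ℝ}
    (h : vecMulVec x (star z) + vecMulVec z (star x) +
      (X * diagonal (fun i => (mu i : ℂ)) - diagonal (fun i => (mu i : ℂ)) * X) = 0)
    {i : ι} (hz : ∀ j, mu j = mu i → z j = 0) :
    (X *ᵥ z) i =
      x i * ((∑ j with mu j ≠ mu i, Complex.normSq (z j) / (mu i - mu j) : ℝ) : ℂ) := by
  have hterm : ∀ j, X i j * z j =
      x i * if mu j ≠ mu i then ((Complex.normSq (z j) / (mu i - mu j) : ℝ) : ℂ) else 0 := by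
    intro j
    by_cases hj : mu j = mu i
    · simp [hj, hz j hj]
    · have hne : (mu i : ℂ) - mu j ≠ 0 := sub_ne_zero.2 (by exact_mod_cast Ne.symm hj)
      have hij := mul_sub_eq_of_vecMulVec_add_commutator_eq_zero h i j
      rw [hz i rfl, Complex.star_def] at hij
      rw [if_pos hj]
      push_cast
      rw [Complex.normSq_eq_conj_mul_self]
      field_simp
      linear_combination z j * hij
  rw [mulVec, dotProduct, sum_congr rfl fun j _ => hterm j, ← mul_sum, ← sum_filter,
    Complex.ofReal_sum]

lemma sum_erase_image_normSq_mulVec_div (mu : ι → ℝ) (z : ι → ℂ) (a : ℝ) :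
    ∑ ν ∈ (univ.image mu).erase a,
        (∑ i, Complex.normSq ((diagonal (fun j => if mu j = ν then (1 : ℂ) else 0) *ᵥ z) i)) /
          (a - ν) =
      ∑ j with mu j ≠ a, Complex.normSq (z j) / (a - mu j) := by
  rw [← sum_fiberwise_of_maps_to (t := (univ.image mu).erase a) (g := mu)
    (fun j hj => mem_erase.2 ⟨(mem_filter.1 hj).2, mem_image_of_mem mu (mem_univ j)⟩)]
  refine sum_congr rfl fun ν hν => ?_
  rw [sum_div, filter_filter, sum_filter]
  refine sum_congr rfl fun j _ => ?_
  by_cases hj : mu j = ν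
  · simp [diagonal_indicator_mulVec_apply, hj, (mem_erase.1 hν).1]
  · simp [diagonal_indicator_mulVec_apply, hj]

end

theorem stmt6_general (n : ℕ) (mu : Fin n → ℝ) (x z : Fin n → ℂ)
    (X : Matrix (Fin n) (Fin n) ℂ)
    (M : Matrix (Fin n) (Fin n) ℂ) (hM : M = Matrix.diagonal (fun i => (mu i : ℂ)))
    (P : ℝ → Matrix (Fin n) (Fin n) ℂ)
    (hP : ∀ ν : ℝ, P ν = Matrix.diagonal (fun i => if mu i = ν then (1 : ℂ) else 0))
    (hcond : vecMulVec x (star z) + vecMulVec z (star x) + (X * M - M * X) = 0)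
    (μ0 : ℝ) (hz : P μ0 *ᵥ z = 0) :
    P μ0 *ᵥ (X *ᵥ z) =
      ((((∑ ν ∈ (Finset.univ.image mu).erase μ0,
          (∑ i, Complex.normSq ((P ν *ᵥ z) i)) / (μ0 - ν)) : ℝ) : ℂ)) • (P μ0 *ᵥ x) := by
  subst hM
  simp only [hP] at hz ⊢
  have hz_eig : ∀ j, mu j = μ0 → z j = 0 := fun j hj => by
    simpa [diagonal_indicator_mulVec_apply, hj] using congrFun hz j
  rw [sum_erase_image_normSq_mulVec_div]
  funext i
  simp only [diagonal_indicator_mulVec_apply, Pi.smul_apply, smul_eq_mul]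
  split_ifs with hi
  · subst hi
    rw [mulVec_apply_of_vecMulVec_add_commutator_eq_zero hcond hz_eig, mul_comm]
  · rw [mul_zero]

theorem stmt6 (n : ℕ) (mu : Fin n → ℝ) (x z : Fin n → ℂ)
    (X : Matrix (Fin n) (Fin n) ℂ) (hX : Xᴴ = -X)
    (M : Matrix (Fin n) (Fin n) ℂ) (hM : M = Matrix.diagonal (fun i => (mu i : ℂ)))
    (P : ℝ → Matrix (Fin n) (Fin n) ℂ)
    (hP : ∀ ν : ℝ, P ν = Matrix.diagonal (fun i => if mu i = ν then (1 : ℂ) else 0))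
    (hcond : vecMulVec x (star z) + vecMulVec z (star x) + (X * M - M * X) = 0)
    (μ0 : ℝ) (hμ0 : μ0 ∈ Set.range mu) (hz : P μ0 *ᵥ z = 0) :
    P μ0 *ᵥ (X *ᵥ z) =
      ((((∑ ν ∈ (Finset.univ.image mu).erase μ0,
          (∑ i, Complex.normSq ((P ν *ᵥ z) i)) / (μ0 - ν)) : ℝ) : ℂ)) • (P μ0 *ᵥ x) :=
  stmt6_general n mu x z X M hM P hP hcond μ0 hz
end

section
/- Let λ_1 ≥ … ≥ λ_{n+1} and μ_1 ≥ … ≥ μ_n be non-increasing real sequences satisfying λ_i ≥ μ_i ≥ λ_{i+1} for all 1 ≤ i ≤ n. For each real t, let a(t) and b(t) be the number of occurrences of t in λ and μ respectively. Then |a(t) − b(t)| ≤ 1 for all t, and Σ_{i=1}^{n+1} λ_i − Σ_{i=1}^{n} μ_i = Σ_{t : a(t)=b(t)+1} t − Σ_{t : b(t)=a(t)+1} t. -/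
open Finset BigOperators

theorem stmt13 (n : ℕ) (lam : Fin (n+1) → ℝ) (mu : Fin n → ℝ)
    (hlam : Antitone lam) (hmu : Antitone mu)
    (hint : ∀ i : Fin n, mu i ≤ lam i.castSucc ∧ lam i.succ ≤ mu i)
    (a b : ℝ → ℕ)
    (ha : ∀ t, a t = (Finset.univ.filter (fun j => lam j = t)).card)
    (hb : ∀ t, b t = (Finset.univ.filter (fun i => mu i = t)).card) :
    (∀ t : ℝ, a t ≤ b t + 1 ∧ b t ≤ a t + 1) ∧
    (∑ i, lam i) - ∑ i, mu i =
      (∑ t ∈ (Finset.univ.image lam ∪ Finset.univ.image mu).filter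
          (fun t => a t = b t + 1), t) -
        ∑ t ∈ (Finset.univ.image lam ∪ Finset.univ.image mu).filter
          (fun t => b t = a t + 1), t := by
  classical
  -- KEY monotone counting lemma
  have key : ∀ (p : ℝ → Prop) [DecidablePred p], (∀ {x y : ℝ}, x ≤ y → p x → p y) →
      (univ.filter (fun i : Fin n => p (mu i))).card ≤
        (univ.filter (fun j : Fin (n+1) => p (lam j))).card ∧
      (univ.filter (fun j : Fin (n+1) => p (lam j))).card ≤
        (univ.filter (fun i : Fin n => p (mu i))).card + 1 := by
    intro p _ hp
    constructor
    · apply Finset.card_le_card_of_injOn (fun i => Fin.castSucc i)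
      · intro i hi
        simp only [coe_filter, mem_filter, Set.mem_setOf_eq, mem_univ, true_and] at hi ⊢
        exact hp (hint i).1 hi
      · intro i _ j _ h
        exact Fin.castSucc_injective n h
    · calc (univ.filter (fun j : Fin (n+1) => p (lam j))).card
          ≤ (insert (0 : Fin (n+1))
              ((univ.filter (fun i : Fin n => p (mu i))).image Fin.succ)).card := by
            apply Finset.card_le_card
            intro j hj
            simp only [mem_filter, mem_univ, true_and] at hj
            rcases eq_or_ne j 0 with h0 | h0
            · simp [h0]
            · obtain ⟨i, rfl⟩ := Fin.exists_succ_eq.mpr h0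
              apply Finset.mem_insert_of_mem
              apply Finset.mem_image_of_mem
              simp only [mem_filter, mem_univ, true_and]
              exact hp (hint i).2 hj
        _ ≤ _ := by
            refine le_trans (Finset.card_insert_le _ _) ?_
            exact Nat.add_le_add_right (Finset.card_image_le) 1
  have split : ∀ {m : ℕ} (f : Fin m → ℝ) (t : ℝ),
      (univ.filter (fun j => t ≤ f j)).card =
        (univ.filter (fun j => f j = t)).card + (univ.filter (fun j => t < f j)).card := by
    intro m f t
    rw [← Finset.card_union_of_disjoint, ← Finset.filter_or]
    · apply congrArg
      apply Finset.filter_congr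
      intro j _
      constructor
      · intro h
        rcases lt_or_eq_of_le h with h' | h'
        · exact Or.inr h'
        · exact Or.inl h'.symm
      · rintro (h | h)
        · exact le_of_eq h.symm
        · exact le_of_lt h
    · rw [Finset.disjoint_left]
      intro x hx hx'
      simp only [mem_filter, mem_univ, true_and] at hx hx'
      exact absurd hx' (by rw [hx]; exact lt_irrefl t)
  have hab : ∀ t : ℝ, a t ≤ b t + 1 ∧ b t ≤ a t + 1 := by
    intro t
    have h1 := key (fun x => t ≤ x) (fun hxy hx => le_trans hx hxy)
    have h2 := key (fun x => t < x) (fun hxy hx => lt_of_lt_of_le hx hxy)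
    have e1 := split lam t
    have e2 := split mu t
    have ha' := ha t
    have hb' := hb t
    omega
  refine ⟨hab, ?_⟩
  set S := (Finset.univ.image lam ∪ Finset.univ.image mu) with hS
  have hsum_lam : ∑ i, lam i = ∑ t ∈ S, t * (a t : ℝ) := by
    have h1 : ∑ i, lam i = ∑ t ∈ Finset.univ.image lam, t * (a t : ℝ) := by
      have := Finset.sum_comp (s := (univ : Finset (Fin (n+1)))) (fun x : ℝ => x) lam
      rw [this]
      apply Finset.sum_congr rfl
      intro t _
      rw [ha t, nsmul_eq_mul, mul_comm]
    rw [h1]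
    apply Finset.sum_subset (Finset.subset_union_left)
    intro t _ hts
    have : a t = 0 := by
      rw [ha t, Finset.card_eq_zero, Finset.filter_eq_empty_iff]
      intro j _ hj
      exact hts (by rw [← hj]; exact Finset.mem_image_of_mem lam (Finset.mem_univ j))
    rw [this]; simp
  have hsum_mu : ∑ i, mu i = ∑ t ∈ S, t * (b t : ℝ) := by
    have h1 : ∑ i, mu i = ∑ t ∈ Finset.univ.image mu, t * (b t : ℝ) := by
      have := Finset.sum_comp (s := (univ : Finset (Fin n))) (fun x : ℝ => x) mu
      rw [this]
      apply Finset.sum_congr rfl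
      intro t _
      rw [hb t, nsmul_eq_mul, mul_comm]
    rw [h1]
    apply Finset.sum_subset (Finset.subset_union_right)
    intro t _ hts
    have : b t = 0 := by
      rw [hb t, Finset.card_eq_zero, Finset.filter_eq_empty_iff]
      intro i _ hi
      exact hts (by rw [← hi]; exact Finset.mem_image_of_mem mu (Finset.mem_univ i))
    rw [this]; simp
  rw [hsum_lam, hsum_mu, ← Finset.sum_sub_distrib, Finset.sum_filter, Finset.sum_filter,
    ← Finset.sum_sub_distrib]
  apply Finset.sum_congr rfl
  intro t _
  have h := hab t
  rcases Nat.lt_trichotomy (a t) (b t) with hlt | heq | hgt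
  · have hb1 : b t = a t + 1 := by omega
    have ha1 : ¬ a t = b t + 1 := by omega
    rw [if_neg ha1, if_pos hb1, hb1]
    push_cast
    ring
  · have ha1 : ¬ a t = b t + 1 := by omega
    have hb1 : ¬ b t = a t + 1 := by omega
    rw [if_neg ha1, if_neg hb1, heq]
    ring
  · have ha1 : a t = b t + 1 := by omega
    have hb1 : ¬ b t = a t + 1 := by omega
    rw [if_pos ha1, if_neg hb1, ha1]
    push_cast
    ring
end
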